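/- If L is a pm-algebra with 0 ≠ 1 that is subdirectly irreducible, then Body(L), the set of prime filters of L that are neither maximal nor minimal, has at most two elements. -/

import Mathlib

/-- A pseudocomplemented De Morgan algebra (pm-algebra): a bounded distributive
lattice with a De Morgan involution `dm` and a pseudocomplement `pc`. -/
class PMAlgebra (L : Type*) extends DistribLattice L, BoundedOrder L where
  dm : L → L
  pc : L → L
  dm_dm : ∀ a : L, dm (dm a) = a
  dm_inf : ∀ a b : L, dm (a ⊓ b) = dm a ⊔ dm b
  pc_iff : ∀ a b : L, a ⊓ b = ⊥ ↔ b ≤ pc a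

namespace PMAlgebra

variable {L : Type*} [PMAlgebra L]

/-- A congruence of a pm-algebra. -/
def IsCongruence (θ : L → L → Prop) : Prop :=
  Equivalence θ ∧
  (∀ a b c d : L, θ a b → θ c d → θ (a ⊓ c) (b ⊓ d)) ∧
  (∀ a b c d : L, θ a b → θ c d → θ (a ⊔ c) (b ⊔ d)) ∧
  (∀ a b : L, θ a b → θ (dm a) (dm b)) ∧
  (∀ a b : L, θ a b → θ (pc a) (pc b))

/-- `L` is simple: it has more than one element and its only congruences are
equality and the total relation. -/
def Simple (L : Type*) [PMAlgebra L] : Prop :=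
  Nontrivial L ∧ ∀ θ : L → L → Prop, IsCongruence θ →
    θ = (fun a b => a = b) ∨ θ = (fun _ _ => True)

/-- `L` is subdirectly irreducible: there is a congruence `μ ≠ Eq` contained in
every congruence different from equality. -/
def SubdirectlyIrreducible (L : Type*) [PMAlgebra L] : Prop :=
  ∃ μ : L → L → Prop, IsCongruence μ ∧ μ ≠ (fun a b => a = b) ∧
    ∀ θ : L → L → Prop, IsCongruence θ → θ ≠ (fun a b => a = b) →
      ∀ a b : L, μ a b → θ a b

/-- A prime filter of the underlying lattice of `L`. -/
def IsPrimeFilter (P : Set L) : Prop :=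
  P.Nonempty ∧ P ≠ Set.univ ∧
  (∀ a b : L, a ∈ P → a ≤ b → b ∈ P) ∧
  (∀ a b : L, a ∈ P → b ∈ P → a ⊓ b ∈ P) ∧
  (∀ a b : L, a ⊔ b ∈ P → a ∈ P ∨ b ∈ P)

/-- The Birula–Rasiowa transformation. -/
def phi (P : Set L) : Set L := {a : L | dm a ∉ P}

/-- `P` is a maximal prime filter. -/
def IsMaximalPF (P : Set L) : Prop :=
  IsPrimeFilter P ∧ ∀ Q : Set L, IsPrimeFilter Q → P ⊆ Q → Q = P

/-- `P` is a minimal prime filter. -/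
def IsMinimalPF (P : Set L) : Prop :=
  IsPrimeFilter P ∧ ∀ Q : Set L, IsPrimeFilter Q → Q ⊆ P → Q = P

/-- The body of `L`: prime filters that are neither maximal nor minimal. -/
def body (L : Type*) [PMAlgebra L] : Set (Set L) :=
  {P : Set L | IsPrimeFilter P ∧ ¬ IsMaximalPF P ∧ ¬ IsMinimalPF P}

/-- The prime filter space of `L` is φ-connected. -/
def PhiConnected (L : Type*) [PMAlgebra L] : Prop :=
  ∀ S : Set (Set L), S ⊆ {P : Set L | IsPrimeFilter P} → S.Nonempty →
    (∀ P Q : Set L, P ∈ S → IsPrimeFilter Q → P ⊆ Q → Q ∈ S) →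
    (∀ P Q : Set L, P ∈ S → IsPrimeFilter Q → Q ⊆ P → Q ∈ S) →
    (∀ P : Set L, P ∈ S → phi P ∈ S) →
    S = {P : Set L | IsPrimeFilter P}

/-- The Kleene identity. -/
def Kleene (L : Type*) [PMAlgebra L] : Prop :=
  ∀ a b : L, a ⊓ dm a ≤ b ⊔ dm b

/-- The term `C(x) = (x ∧ x') ∨ (x ∧ x')*`. -/
def C (x : L) : L := (x ⊓ dm x) ⊔ pc (x ⊓ dm x)

/-- The term `T(x) = C(x) ∧ C(x)'`. -/
def T (x : L) : L := C x ⊓ dm (C x)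

end PMAlgebra

open PMAlgebra

/-
Identify two elements when they lie in the same prime filters outside a φ-closed part `X` of the
body. This is a congruence: membership of `x'` in `P` is read off at `φ P`, and membership of
`x*` at the maximal prime filters above `P`, none of which lies in the body. It is nontrivial as
soon as some `R ∈ X` has elements `s ∈ R`, `u ∉ R` such that every prime filter containing `s`
but not `u` lies in `X`.

Let the monolith identify `c ≠ d`, and let `Q` be a prime filter separating them. A body filter
`R ∉ {Q, φ Q}` has such `s`, `u` for `X = body \ {Q, φ Q}`: taking `s` in no minimal and `u` in
every maximal prime filter confines the prime filters containing `s` but not `u` to the body, and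
shrinking the pair excludes `Q` and `φ Q`. The resulting congruence identifies `c` and `d`, yet
`Q ∉ X` separates them.
-/

lemma ne_eq_of_rel {α : Type*} {θ : α → α → Prop} {a b : α} (h : θ a b) (hab : a ≠ b) :
    θ ≠ (fun a b => a = b) := fun he => hab (by rwa [he] at h)

lemma exists_rel_ne_of_ne_eq {α : Type*} {μ : α → α → Prop} (hμ : ∀ a, μ a a)
    (hne : μ ≠ (fun a b => a = b)) : ∃ c d : α, μ c d ∧ c ≠ d := by
  by_contra! h
  exact hne (funext₂ fun a b => propext ⟨h a b, fun e => e ▸ hμ a⟩)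

namespace PMAlgebra

variable {L : Type*} [PMAlgebra L]

section DeMorgan

lemma dm_antitone : Antitone (dm : L → L) := fun a b h => by
  rw [← inf_eq_left.mpr h, dm_inf]
  exact le_sup_right

lemma dm_top : dm (⊤ : L) = ⊥ :=
  le_bot_iff.mp (by simpa only [dm_dm] using dm_antitone (le_top : dm (⊥ : L) ≤ ⊤))

lemma dm_bot : dm (⊥ : L) = ⊤ := by rw [← dm_top, dm_dm]

lemma dm_sup (a b : L) : dm (a ⊔ b) = dm a ⊓ dm b := by
  rw [← dm_dm (dm a ⊓ dm b), dm_inf, dm_dm, dm_dm]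

lemma inf_pc_self (a : L) : a ⊓ pc a = ⊥ := (pc_iff a (pc a)).mpr le_rfl

end DeMorgan

namespace IsPrimeFilter

variable {P : Set L}

lemma mem_of_le (hP : IsPrimeFilter P) {a b : L} (ha : a ∈ P) (hab : a ≤ b) : b ∈ P :=
  hP.2.2.1 a b ha hab

lemma inf_mem (hP : IsPrimeFilter P) {a b : L} (ha : a ∈ P) (hb : b ∈ P) : a ⊓ b ∈ P :=
  hP.2.2.2.1 a b ha hb

lemma mem_or_mem (hP : IsPrimeFilter P) {a b : L} (h : a ⊔ b ∈ P) : a ∈ P ∨ b ∈ P :=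
  hP.2.2.2.2 a b h

lemma top_mem (hP : IsPrimeFilter P) : (⊤ : L) ∈ P :=
  let ⟨_, ha⟩ := hP.1
  hP.mem_of_le ha le_top

lemma bot_notMem (hP : IsPrimeFilter P) : (⊥ : L) ∉ P := fun h =>
  hP.2.1 (Set.eq_univ_of_forall fun _ => hP.mem_of_le h bot_le)

lemma inf_mem_iff (hP : IsPrimeFilter P) {a b : L} : a ⊓ b ∈ P ↔ a ∈ P ∧ b ∈ P :=
  ⟨fun h => ⟨hP.mem_of_le h inf_le_left, hP.mem_of_le h inf_le_right⟩,
    fun h => hP.inf_mem h.1 h.2⟩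

lemma sup_mem_iff (hP : IsPrimeFilter P) {a b : L} : a ⊔ b ∈ P ↔ a ∈ P ∨ b ∈ P :=
  ⟨hP.mem_or_mem, fun h => h.elim (hP.mem_of_le · le_sup_left) (hP.mem_of_le · le_sup_right)⟩

end IsPrimeFilter

section Phi

lemma mem_phi {P : Set L} {a : L} : a ∈ phi P ↔ dm a ∉ P := Iff.rfl

lemma dm_mem_iff {P : Set L} {a : L} : dm a ∈ P ↔ a ∉ phi P := by
  rw [mem_phi, not_not]

@[simp]
lemma phi_phi (P : Set L) : phi (phi P) = P := by
  ext a
  simp [phi, dm_dm]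

lemma phi_involutive : Function.Involutive (phi : Set L → Set L) := phi_phi

lemma phi_anti {P Q : Set L} (h : P ⊆ Q) : phi Q ⊆ phi P := fun _ ha hP => ha (h hP)

lemma IsPrimeFilter.phi {P : Set L} (hP : IsPrimeFilter P) : IsPrimeFilter (phi P) := by
  refine ⟨⟨⊤, ?_⟩, fun h => ?_, fun a b ha hab hb => ?_, fun a b ha hb => ?_, fun a b h => ?_⟩
  · rw [mem_phi, dm_top]
    exact hP.bot_notMem
  · exact Set.eq_univ_iff_forall.mp h ⊥ (by rw [dm_bot]; exact hP.top_mem)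
  · exact ha (hP.mem_of_le hb (dm_antitone hab))
  · rw [mem_phi, dm_inf, hP.sup_mem_iff]
    exact fun h => h.elim ha hb
  · simp only [mem_phi, dm_sup, hP.inf_mem_iff, not_and_or] at h ⊢
    exact h

lemma IsMinimalPF.phi {P : Set L} (h : IsMinimalPF P) : IsMaximalPF (phi P) := by
  refine ⟨h.1.phi, fun Q hQ hPQ => ?_⟩
  rw [← h.2 (PMAlgebra.phi Q) hQ.phi (by simpa only [phi_phi] using phi_anti hPQ), phi_phi]

lemma IsMaximalPF.phi {P : Set L} (h : IsMaximalPF P) : IsMinimalPF (phi P) := by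
  refine ⟨h.1.phi, fun Q hQ hQP => ?_⟩
  rw [← h.2 (PMAlgebra.phi Q) hQ.phi (by simpa only [phi_phi] using phi_anti hQP), phi_phi]

lemma phi_mem_body {P : Set L} (h : P ∈ body L) : phi P ∈ body L :=
  ⟨h.1.phi, fun hmax => h.2.2 (by simpa only [phi_phi] using hmax.phi),
    fun hmin => h.2.1 (by simpa only [phi_phi] using hmin.phi)⟩

end Phi

section Existence

lemma isPrimeFilter_compl {J : Order.Ideal L} (hJ : J.IsPrime) :
    IsPrimeFilter (J : Set L)ᶜ := by
  refine ⟨⟨⊤, hJ.top_notMem⟩, fun h => ?_, fun a b ha hab hb => ha (J.lower hab hb),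
    fun a b ha hb h => (hJ.mem_or_mem h).elim ha hb, fun a b h => ?_⟩
  · exact (h ▸ Set.mem_univ ⊥ : (⊥ : L) ∈ (J : Set L)ᶜ) J.bot_mem
  · by_contra! hab
    exact h (J.sup_mem (not_not.mp hab.1) (not_not.mp hab.2))

lemma exists_isPrimeFilter_of_disjoint {F : Set L} (hF : Order.IsPFilter F) {I : Order.Ideal L}
    (hFI : Disjoint F I) : ∃ T : Set L, IsPrimeFilter T ∧ F ⊆ T ∧ Disjoint T I := by
  obtain ⟨J, hJ, hIJ, hFJ⟩ :=
    DistribLattice.prime_ideal_of_disjoint_filter_ideal (F := hF.toPFilter) hFI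
  exact ⟨(J : Set L)ᶜ, isPrimeFilter_compl hJ, Set.subset_compl_iff_disjoint_right.mpr hFJ,
    disjoint_compl_left.mono_right hIJ⟩

lemma exists_isPrimeFilter_of_not_le {a b : L} (h : ¬ a ≤ b) :
    ∃ T : Set L, IsPrimeFilter T ∧ a ∈ T ∧ b ∉ T := by
  obtain ⟨T, hT, haT, hbT⟩ := exists_isPrimeFilter_of_disjoint
    (Order.PFilter.principal a).isPFilter (I := Order.Ideal.principal b)
    (Set.disjoint_left.mpr fun x hax hxb => h (le_trans hax hxb))
  exact ⟨T, hT, haT le_rfl, fun hb => Set.disjoint_left.mp hbT hb le_rfl⟩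

lemma exists_isPrimeFilter_separating {a b : L} (h : a ≠ b) :
    ∃ T : Set L, IsPrimeFilter T ∧ ¬ (a ∈ T ↔ b ∈ T) := by
  by_cases hab : a ≤ b
  · obtain ⟨T, hT, hbT, haT⟩ := exists_isPrimeFilter_of_not_le fun hba => h (hab.antisymm hba)
    exact ⟨T, hT, fun hiff => haT (hiff.mpr hbT)⟩
  · obtain ⟨T, hT, haT, hbT⟩ := exists_isPrimeFilter_of_not_le hab
    exact ⟨T, hT, fun hiff => hbT (hiff.mp haT)⟩

lemma IsPrimeFilter.exists_superset_mem {T : Set L} (hT : IsPrimeFilter T) {a : L}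
    (ha : ∀ t ∈ T, t ⊓ a ≠ ⊥) : ∃ Q : Set L, IsPrimeFilter Q ∧ T ⊆ Q ∧ a ∈ Q := by
  set F : Set L := {x | ∃ t ∈ T, t ⊓ a ≤ x}
  have hF : Order.IsPFilter F := by
    refine .of_def ⟨a, ⊤, hT.top_mem, inf_le_right⟩ ?_
      fun hxy ⟨t, ht, hx⟩ => ⟨t, ht, hx.trans hxy⟩
    rintro x ⟨t, ht, hx⟩ y ⟨t', ht', hy⟩
    refine ⟨x ⊓ y, ⟨t ⊓ t', hT.inf_mem ht ht', le_inf ?_ ?_⟩, inf_le_left, inf_le_right⟩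
    · exact (inf_le_inf_right a inf_le_left).trans hx
    · exact (inf_le_inf_right a inf_le_right).trans hy
  obtain ⟨Q, hQ, hFQ, -⟩ := exists_isPrimeFilter_of_disjoint hF (I := Order.Ideal.principal ⊥)
    (Set.disjoint_left.mpr fun x ⟨t, ht, hx⟩ hx' => ha t ht (le_bot_iff.mp (hx.trans hx')))
  exact ⟨Q, hQ, fun t ht => hFQ ⟨t, ht, inf_le_left⟩, hFQ ⟨⊤, hT.top_mem, inf_le_right⟩⟩

lemma isPrimeFilter_sUnion {c : Set (Set L)} (hc : ∀ P ∈ c, IsPrimeFilter P)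
    (hchain : IsChain (· ⊆ ·) c) (hne : c.Nonempty) : IsPrimeFilter (⋃₀ c) := by
  obtain ⟨P₀, hP₀⟩ := hne
  refine ⟨⟨⊤, P₀, hP₀, (hc P₀ hP₀).top_mem⟩, fun h => ?_, ?_, ?_, ?_⟩
  · obtain ⟨P, hP, hbot⟩ := (h ▸ Set.mem_univ ⊥ : (⊥ : L) ∈ ⋃₀ c)
    exact (hc P hP).bot_notMem hbot
  · rintro a b ⟨P, hP, ha⟩ hab
    exact ⟨P, hP, (hc P hP).mem_of_le ha hab⟩
  · rintro a b ⟨P, hP, ha⟩ ⟨P', hP', hb⟩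
    rcases hchain.total hP hP' with h | h
    · exact ⟨P', hP', (hc P' hP').inf_mem (h ha) hb⟩
    · exact ⟨P, hP, (hc P hP).inf_mem ha (h hb)⟩
  · rintro a b ⟨P, hP, hab⟩
    exact ((hc P hP).mem_or_mem hab).imp (⟨P, hP, ·⟩) (⟨P, hP, ·⟩)

lemma IsPrimeFilter.exists_isMaximalPF_superset {T : Set L} (hT : IsPrimeFilter T) :
    ∃ M : Set L, IsMaximalPF M ∧ T ⊆ M := by
  obtain ⟨M, hTM, hM⟩ := zorn_subset_nonempty {Q | IsPrimeFilter Q ∧ T ⊆ Q}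
    (fun c hc hchain hne => ⟨⋃₀ c,
      ⟨isPrimeFilter_sUnion (fun P hP => (hc hP).1) hchain hne,
        let ⟨P, hP⟩ := hne; (hc hP).2.trans (Set.subset_sUnion_of_mem hP)⟩,
      fun _ => Set.subset_sUnion_of_mem⟩) T ⟨hT, le_rfl⟩
  exact ⟨M, ⟨hM.1.1, fun Q hQ hMQ => (hM.2 ⟨hQ, hM.1.2.trans hMQ⟩ hMQ).antisymm hMQ⟩, hTM⟩

lemma IsPrimeFilter.pc_mem_iff {T : Set L} (hT : IsPrimeFilter T) (a : L) :
    pc a ∈ T ↔ ∀ M : Set L, IsMaximalPF M → T ⊆ M → a ∉ M := by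
  refine ⟨fun h M hM hTM haM => hM.1.bot_notMem ?_, fun h => ?_⟩
  · exact inf_pc_self a ▸ hM.1.inf_mem haM (hTM h)
  · by_contra hpc
    obtain ⟨Q, hQ, hTQ, haQ⟩ := hT.exists_superset_mem fun t ht hta =>
      hpc (hT.mem_of_le ht ((pc_iff a t).mp (inf_comm t a ▸ hta)))
    obtain ⟨M, hM, hQM⟩ := hQ.exists_isMaximalPF_superset
    exact h M hM (hTQ.trans hQM) (hQM haQ)

lemma IsMaximalPF.mem_or_pc_mem {M : Set L} (hM : IsMaximalPF M) (a : L) :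
    a ∈ M ∨ pc a ∈ M := by
  rw [or_iff_not_imp_left, hM.1.pc_mem_iff]
  intro ha M' hM' hMM' haM'
  exact ha (hM.2 M' hM'.1 hMM' ▸ haM')

end Existence

section Congruence

def agree (S : Set (Set L)) (a b : L) : Prop := ∀ P ∈ S, a ∈ P ↔ b ∈ P

lemma isCongruence_agree {S : Set (Set L)} (hS : ∀ P ∈ S, IsPrimeFilter P)
    (hphi : ∀ P ∈ S, phi P ∈ S) (hmax : ∀ M : Set L, IsMaximalPF M → M ∈ S) :
    IsCongruence (agree S) := by
  refine ⟨⟨fun _ _ _ => Iff.rfl, fun h P hP => (h P hP).symm,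
    fun h h' P hP => (h P hP).trans (h' P hP)⟩, ?_, ?_, ?_, ?_⟩
  · intro a b c d h h' P hP
    rw [(hS P hP).inf_mem_iff, (hS P hP).inf_mem_iff, h P hP, h' P hP]
  · intro a b c d h h' P hP
    rw [(hS P hP).sup_mem_iff, (hS P hP).sup_mem_iff, h P hP, h' P hP]
  · intro a b h P hP
    rw [dm_mem_iff, dm_mem_iff, h (phi P) (hphi P hP)]
  · intro a b h P hP
    simp only [(hS P hP).pc_mem_iff]
    exact forall₂_congr fun M hM => by rw [h M (hmax M hM)]

lemma agree_inf_self {S : Set (Set L)} (hS : ∀ P ∈ S, IsPrimeFilter P) {s u : L}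
    (hsu : ∀ P ∈ S, s ∈ P → u ∈ P) : agree S (s ⊓ u) s := fun P hP => by
  rw [(hS P hP).inf_mem_iff]
  exact ⟨And.left, fun hs => ⟨hs, hsu P hP hs⟩⟩

lemma isCongruence_agree_diff {X : Set (Set L)} (hX : X ⊆ body L)
    (hXphi : ∀ P ∈ X, phi P ∈ X) : IsCongruence (agree {P | IsPrimeFilter P ∧ P ∉ X}) := by
  refine isCongruence_agree (fun P hP => hP.1) (fun P hP => ⟨hP.1.phi, fun h => ?_⟩)
    fun M hM => ⟨hM.1, fun h => (hX h).2.1 hM⟩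
  exact hP.2 (phi_phi P ▸ hXphi _ h)

end Congruence

section Body

lemma IsPrimeFilter.exists_notMem_forall_isMaximalPF_mem {P : Set L} (hP : IsPrimeFilter P)
    (h : ¬ IsMaximalPF P) : ∃ u ∉ P, ∀ M : Set L, IsMaximalPF M → u ∈ M := by
  obtain ⟨Q, hQ, hPQ, hQP⟩ : ∃ Q, IsPrimeFilter Q ∧ P ⊆ Q ∧ Q ≠ P := by
    by_contra! hc
    exact h ⟨hP, hc⟩
  obtain ⟨a, haQ, haP⟩ := Set.exists_of_ssubset (hPQ.ssubset_of_ne hQP.symm)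
  refine ⟨a ⊔ pc a, fun hu => (hP.mem_or_mem hu).elim haP fun hpc => ?_,
    fun M hM => (hM.mem_or_pc_mem a).elim (hM.1.mem_of_le · le_sup_left)
      (hM.1.mem_of_le · le_sup_right)⟩
  exact hQ.bot_notMem (inf_pc_self a ▸ hQ.inf_mem haQ (hPQ hpc))

lemma exists_cut_subset_body {R : Set L} (hR : R ∈ body L) :
    ∃ s u : L, s ∈ R ∧ u ∉ R ∧ ∀ T : Set L, IsPrimeFilter T → s ∈ T → u ∉ T → T ∈ body L := by
  obtain ⟨u, huR, hu⟩ := hR.1.exists_notMem_forall_isMaximalPF_mem hR.2.1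
  obtain ⟨w, hwR, hw⟩ := hR.1.phi.exists_notMem_forall_isMaximalPF_mem
    fun hmax => hR.2.2 (by simpa only [phi_phi] using hmax.phi)
  refine ⟨dm w, u, dm_mem_iff.mpr hwR, huR, fun T hT hsT huT =>
    ⟨hT, fun hmax => huT (hu T hmax), fun hmin => ?_⟩⟩
  exact dm_mem_iff.mp hsT (hw _ hmin.phi)

lemma exists_cut_avoiding {R Z : Set L} (hR : IsPrimeFilter R) (hZ : IsPrimeFilter Z)
    (hRZ : R ≠ Z) {s u : L} (hsR : s ∈ R) (huR : u ∉ R) :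
    ∃ s' u' : L, s' ≤ s ∧ u ≤ u' ∧ s' ∈ R ∧ u' ∉ R ∧ (s' ∈ Z → u' ∈ Z) := by
  by_cases hsub : R ⊆ Z
  · obtain ⟨z, hzZ, hzR⟩ := Set.exists_of_ssubset (hsub.ssubset_of_ne hRZ)
    refine ⟨s, u ⊔ z, le_rfl, le_sup_left, hsR, fun h => (hR.mem_or_mem h).elim huR hzR,
      fun _ => hZ.mem_of_le hzZ le_sup_right⟩
  · obtain ⟨z, hzR, hzZ⟩ := Set.not_subset.mp hsub
    refine ⟨s ⊓ z, u, inf_le_left, le_rfl, hR.inf_mem hsR hzR, huR, fun h => ?_⟩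
    exact absurd (hZ.mem_of_le h inf_le_right) hzZ

lemma exists_cut_subset_body_avoiding {R Z₁ Z₂ : Set L} (hR : R ∈ body L)
    (hZ₁ : IsPrimeFilter Z₁) (hZ₂ : IsPrimeFilter Z₂) (hRZ₁ : R ≠ Z₁) (hRZ₂ : R ≠ Z₂) :
    ∃ s u : L, s ∈ R ∧ u ∉ R ∧ (s ∈ Z₁ → u ∈ Z₁) ∧ (s ∈ Z₂ → u ∈ Z₂) ∧
      ∀ T : Set L, IsPrimeFilter T → s ∈ T → u ∉ T → T ∈ body L := by
  obtain ⟨s, u, hsR, huR, hbody⟩ := exists_cut_subset_body hR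
  obtain ⟨s₁, u₁, hs₁, hu₁, hs₁R, hu₁R, hZ₁'⟩ := exists_cut_avoiding hR.1 hZ₁ hRZ₁ hsR huR
  obtain ⟨s₂, u₂, hs₂, hu₂, hs₂R, hu₂R, hZ₂'⟩ := exists_cut_avoiding hR.1 hZ₂ hRZ₂ hs₁R hu₁R
  refine ⟨s₂, u₂, hs₂R, hu₂R, fun h => hZ₁.mem_of_le (hZ₁' (hZ₁.mem_of_le h hs₂)) hu₂, hZ₂',
    fun T hT hsT huT => hbody T hT (hT.mem_of_le hsT (hs₂.trans hs₁)) fun hu => huT ?_⟩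
  exact hT.mem_of_le hu (hu₁.trans hu₂)

lemma exists_isCongruence_ne_eq_of_mem_body {R Q : Set L} (hR : R ∈ body L)
    (hQ : IsPrimeFilter Q) (hRQ : R ≠ Q) (hRQ' : R ≠ phi Q) :
    ∃ θ : L → L → Prop, IsCongruence θ ∧ θ ≠ (fun a b => a = b) ∧
      ∀ a b : L, θ a b → (a ∈ Q ↔ b ∈ Q) := by
  obtain ⟨s, u, hsR, huR, hsuQ, hsuQ', hcut⟩ :=
    exists_cut_subset_body_avoiding hR hQ hQ.phi hRQ hRQ'
  set X := body L \ {Q, phi Q}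
  have hX : ∀ P ∈ X, phi P ∈ X := fun P hP => ⟨phi_mem_body hP.1, by
    simpa only [Set.mem_insert_iff, Set.mem_singleton_iff, phi_involutive.eq_iff, phi_phi,
      or_comm] using hP.2⟩
  have hsu : agree {P | IsPrimeFilter P ∧ P ∉ X} (s ⊓ u) s :=
    agree_inf_self (fun P hP => hP.1) fun P hP hsP => by_contra fun huP =>
      hP.2 ⟨hcut P hP.1 hsP huP, by
        rintro (rfl | rfl)
        exacts [huP (hsuQ hsP), huP (hsuQ' hsP)]⟩
  refine ⟨_, isCongruence_agree_diff Set.sdiff_subset hX,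
    ne_eq_of_rel hsu fun h => huR (hR.1.mem_of_le hsR (inf_eq_left.mp h)), fun a b h => ?_⟩
  exact h Q ⟨hQ, fun hQX => hQX.2 (Set.mem_insert Q _)⟩

end Body

end PMAlgebra

theorem body_encard_le_two_of_subdirectlyIrreducible_general {L : Type*} [PMAlgebra L]
    (hsi : SubdirectlyIrreducible L) :
    (body L).encard ≤ 2 := by
  obtain ⟨μ, hμ, hμne, hμmin⟩ := hsi
  obtain ⟨c, d, hcd, hne⟩ := exists_rel_ne_of_ne_eq hμ.1.refl hμne
  obtain ⟨Q, hQ, hQcd⟩ := exists_isPrimeFilter_separating hne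
  have hbody : body L ⊆ {Q, phi Q} := fun R hR => by
    by_contra hRQ
    simp only [Set.mem_insert_iff, Set.mem_singleton_iff, not_or] at hRQ
    obtain ⟨θ, hθ, hθne, hθQ⟩ := exists_isCongruence_ne_eq_of_mem_body hR hQ hRQ.1 hRQ.2
    exact hQcd (hθQ c d (hμmin θ hθ hθne c d hcd))
  calc (body L).encard ≤ ({Q, phi Q} : Set (Set L)).encard := Set.encard_mono hbody
    _ ≤ 2 := (Set.encard_insert_le _ _).trans (by rw [Set.encard_singleton]; rfl)

/-- The body of a nontrivial subdirectly irreducible pm-algebra has at most two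
elements. -/
theorem body_encard_le_two_of_subdirectlyIrreducible {L : Type*} [PMAlgebra L]
    (hnt : (⊥ : L) ≠ ⊤) (hsi : SubdirectlyIrreducible L) :
    (body L).encard ≤ 2 :=
  body_encard_le_two_of_subdirectlyIrreducible_general hsi
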